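/- arXiv:0803.2338 — 2 statements merged into one kernel-verified Lean document; each statement's English description precedes it below -/
import Mathlib

section
/- An interval valued fuzzy set F of a pseudo BL-algebra A is an interval valued (∈,∈∨q)-fuzzy filter if and only if: (F7) μ_F(1) ≥ rmin{μ_F(x), [0.5,0.5]} for all x, and (F8) μ_F(y) ≥ rmin{μ_F(x), μ_F(x → y), [0.5,0.5]} for all x, y (equivalently with ↪ in place of →). -/
noncomputable section

universe u

class PseudoBL (A : Type u) extends Lattice A, BoundedOrder A where
  mul : A → A → A
  rimp : A → A → A
  limp : A → A → A
  mul_assoc : ∀ x y z : A, mul (mul x y) z = mul x (mul y z)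
  mul_top : ∀ x : A, mul x ⊤ = x
  top_mul : ∀ x : A, mul ⊤ x = x
  res_rimp : ∀ x y z : A, mul x y ≤ z ↔ x ≤ rimp y z
  res_limp : ∀ x y z : A, mul x y ≤ z ↔ y ≤ limp x z
  inf_eq_rimp : ∀ x y : A, x ⊓ y = mul (rimp x y) x
  inf_eq_limp : ∀ x y : A, x ⊓ y = mul x (limp x y)
  sup_rimp_eq_top : ∀ x y : A, rimp x y ⊔ rimp y x = ⊤
  sup_limp_eq_top : ∀ x y : A, limp x y ⊔ limp y x = ⊤

open PseudoBL

def PseudoBL.IsFilter {A : Type u} [PseudoBL A] (I : Set A) : Prop :=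
  I.Nonempty ∧ (∀ x ∈ I, ∀ y ∈ I, mul x y ∈ I) ∧ ∀ x ∈ I, ∀ y : A, x ≤ y → y ∈ I

def PseudoBL.IsImplicativeFilter {A : Type u} [PseudoBL A] (I : Set A) : Prop :=
  PseudoBL.IsFilter I ∧ ∀ x y : A,
    (limp (rimp x y) x ∈ I → x ∈ I) ∧ (rimp (limp x y) x ∈ I → x ∈ I)

/-- Interval numbers `[a⊥, a⊤]` with `0 ≤ a⊥ ≤ a⊤ ≤ 1`. -/
structure IV where
  lo : ℝ
  hi : ℝ
  lo_nonneg : 0 ≤ lo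
  lo_le_hi : lo ≤ hi
  hi_le_one : hi ≤ 1

namespace IV

instance : LE IV := ⟨fun a b => a.lo ≤ b.lo ∧ a.hi ≤ b.hi⟩
instance : LT IV := ⟨fun a b => a ≤ b ∧ a ≠ b⟩

def rmin (a b : IV) : IV :=
  ⟨min a.lo b.lo, min a.hi b.hi, le_min a.lo_nonneg b.lo_nonneg,
    min_le_min a.lo_le_hi b.lo_le_hi, (min_le_left _ _).trans a.hi_le_one⟩

def rmax (a b : IV) : IV :=
  ⟨max a.lo b.lo, max a.hi b.hi, a.lo_nonneg.trans (le_max_left _ _),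
    max_le_max a.lo_le_hi b.lo_le_hi, max_le a.hi_le_one b.hi_le_one⟩

def mk' (a b : ℝ) (h0 : 0 ≤ a) (h : a ≤ b) (h1 : b ≤ 1) : IV := ⟨a, b, h0, h, h1⟩

def zero : IV := ⟨0, 0, le_refl 0, le_refl 0, zero_le_one⟩

def one : IV := ⟨1, 1, zero_le_one, le_refl 1, le_refl 1⟩

def half : IV := ⟨1/2, 1/2, by norm_num, le_refl _, by norm_num⟩

end IV

open IV

/-- The level subset `F_t = {x : μ_F(x) ≥ t}`. -/
def lvl {A : Type u} [PseudoBL A] (F : A → IV) (t : IV) : Set A := {x | t ≤ F x}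

/-- `(F5)`–`(F6)`: interval valued `(∈,∈∨q)`-fuzzy filter. -/
def InqFilter {A : Type u} [PseudoBL A] (F : A → IV) : Prop :=
  (∀ x y : A, rmin (F x) (rmin (F y) half) ≤ F (mul x y)) ∧
  ∀ x y : A, x ≤ y → rmin (F x) half ≤ F y

/-- `(F13)`. -/
def InqImplicative {A : Type u} [PseudoBL A] (F : A → IV) : Prop :=
  InqFilter F ∧ ∀ x y : A,
    rmin (F (limp (rimp x y) x)) half ≤ F x ∧
    rmin (F (rimp (limp x y) x)) half ≤ F x

/-- `(F16)`: interval valued `(∈,∈∨q)`-fuzzy MV-filter. -/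
def InqMV {A : Type u} [PseudoBL A] (F : A → IV) : Prop :=
  InqFilter F ∧ ∀ x y : A,
    rmin (F (rimp x y)) half ≤ F (rimp (limp (rimp y x) x) y) ∧
    rmin (F (limp x y)) half ≤ F (limp (rimp (limp y x) x) y)

/-- `(F17)`: interval valued `(∈,∈∨q)`-fuzzy G-filter. -/
def InqG {A : Type u} [PseudoBL A] (F : A → IV) : Prop :=
  InqFilter F ∧ ∀ x y : A,
    rmin (F (rimp x (rimp x y))) half ≤ F (rimp x y) ∧
    rmin (F (limp x (limp x y))) half ≤ F (limp x y)

/-- Interval valued fuzzy implicative filter with thresholds `(α, β)`. -/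
def ThresholdImplicative {A : Type u} [PseudoBL A] (F : A → IV) (α β : IV) : Prop :=
  (∀ x y : A, rmin (F x) (rmin (F y) β) ≤ rmax (F (mul x y)) α) ∧
  (∀ x y : A, x ≤ y → rmin (F x) β ≤ rmax (F y) α) ∧
  (∀ x y : A, rmin (F (limp (rimp x y) x)) β ≤ rmax (F x) α) ∧
  (∀ x y : A, rmin (F (rimp (limp x y) x)) β ≤ rmax (F x) α)


lemma IV.le_def' {a b : IV} : a ≤ b ↔ a.lo ≤ b.lo ∧ a.hi ≤ b.hi := Iff.rfl
@[simp] lemma IV.rmin_lo (a b : IV) : (IV.rmin a b).lo = min a.lo b.lo := rfl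
@[simp] lemma IV.rmin_hi (a b : IV) : (IV.rmin a b).hi = min a.hi b.hi := rfl
@[simp] lemma IV.half_lo : IV.half.lo = 1/2 := rfl
@[simp] lemma IV.half_hi : IV.half.hi = 1/2 := rfl

theorem stmt9 {A : Type u} [PseudoBL A] (F : A → IV) :
    InqFilter F ↔
      ((∀ x : A, rmin (F x) IV.half ≤ F ⊤) ∧
        ((∀ x y : A, rmin (F x) (rmin (F (rimp x y)) IV.half) ≤ F y) ∨
          (∀ x y : A, rmin (F x) (rmin (F (limp x y)) IV.half) ≤ F y))) := by 
  constructor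
  · rintro ⟨h1, h2⟩
    constructor
    · intro x
      exact h2 x ⊤ le_top
    · left
      intro x y
      have hle : mul (rimp x y) x ≤ y := by
        rw [← inf_eq_rimp]; exact inf_le_right
      have hm := h2 _ _ hle
      have hp := h1 (rimp x y) x
      rw [IV.le_def'] at hm hp ⊢
      simp only [IV.rmin_lo, IV.rmin_hi, IV.half_lo, IV.half_hi] at hm hp ⊢
      obtain ⟨hm1, hm2⟩ := hm
      obtain ⟨hp1, hp2⟩ := hp
      constructor
      · calc min (F x).lo (min (F (rimp x y)).lo (1/2))
            ≤ min (min (F (rimp x y)).lo (min (F x).lo (1/2))) (1/2) := by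
              simp [le_min_iff, min_le_iff]
          _ ≤ min (F (mul (rimp x y) x)).lo (1/2) := min_le_min hp1 le_rfl
          _ ≤ (F y).lo := hm1
      · calc min (F x).hi (min (F (rimp x y)).hi (1/2))
            ≤ min (min (F (rimp x y)).hi (min (F x).hi (1/2))) (1/2) := by
              simp [le_min_iff, min_le_iff]
          _ ≤ min (F (mul (rimp x y) x)).hi (1/2) := min_le_min hp2 le_rfl
          _ ≤ (F y).hi := hm2
  · rintro ⟨h7, h8⟩
    rcases h8 with h8 | h8
    · -- rimp version
      have mono : ∀ x y : A, x ≤ y → IV.rmin (F x) IV.half ≤ F y := by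
        intro x y hxy
        have htop : rimp x y = ⊤ := by
          have : (⊤ : A) ≤ rimp x y := by
            rw [← res_rimp, top_mul]; exact hxy
          exact le_antisymm le_top this
        have h := h8 x y
        rw [htop] at h
        have h7x := h7 x
        rw [IV.le_def'] at h h7x ⊢
        simp only [IV.rmin_lo, IV.rmin_hi, IV.half_lo, IV.half_hi] at h h7x ⊢
        constructor
        · calc min (F x).lo (1/2) ≤ min (F x).lo (min (min (F x).lo (1/2)) (1/2)) := by
                simp [le_min_iff, min_le_iff]
            _ ≤ min (F x).lo (min (F ⊤).lo (1/2)) :=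
                min_le_min le_rfl (min_le_min h7x.1 le_rfl)
            _ ≤ (F y).lo := h.1
        · calc min (F x).hi (1/2) ≤ min (F x).hi (min (min (F x).hi (1/2)) (1/2)) := by
                simp [le_min_iff, min_le_iff]
            _ ≤ min (F x).hi (min (F ⊤).hi (1/2)) :=
                min_le_min le_rfl (min_le_min h7x.2 le_rfl)
            _ ≤ (F y).hi := h.2
      refine ⟨?_, mono⟩
      intro x y
      have hx : x ≤ rimp y (mul x y) := by rw [← res_rimp]
      have hmono := mono _ _ hx
      have h := h8 y (mul x y)
      rw [IV.le_def'] at hmono h ⊢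
      simp only [IV.rmin_lo, IV.rmin_hi, IV.half_lo, IV.half_hi] at hmono h ⊢
      constructor
      · calc min (F x).lo (min (F y).lo (1/2))
            ≤ min (F y).lo (min (min (F x).lo (1/2)) (1/2)) := by
              simp [le_min_iff, min_le_iff]
          _ ≤ min (F y).lo (min (F (rimp y (mul x y))).lo (1/2)) :=
              min_le_min le_rfl (min_le_min hmono.1 le_rfl)
          _ ≤ (F (mul x y)).lo := h.1
      · calc min (F x).hi (min (F y).hi (1/2))
            ≤ min (F y).hi (min (min (F x).hi (1/2)) (1/2)) := by
              simp [le_min_iff, min_le_iff]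
          _ ≤ min (F y).hi (min (F (rimp y (mul x y))).hi (1/2)) :=
              min_le_min le_rfl (min_le_min hmono.2 le_rfl)
          _ ≤ (F (mul x y)).hi := h.2
    · -- limp version
      have mono : ∀ x y : A, x ≤ y → IV.rmin (F x) IV.half ≤ F y := by
        intro x y hxy
        have htop : limp x y = ⊤ := by
          have : (⊤ : A) ≤ limp x y := by
            rw [← res_limp, mul_top]; exact hxy
          exact le_antisymm le_top this
        have h := h8 x y
        rw [htop] at h
        have h7x := h7 x
        rw [IV.le_def'] at h h7x ⊢
        simp only [IV.rmin_lo, IV.rmin_hi, IV.half_lo, IV.half_hi] at h h7x ⊢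
        constructor
        · calc min (F x).lo (1/2) ≤ min (F x).lo (min (min (F x).lo (1/2)) (1/2)) := by
                simp [le_min_iff, min_le_iff]
            _ ≤ min (F x).lo (min (F ⊤).lo (1/2)) :=
                min_le_min le_rfl (min_le_min h7x.1 le_rfl)
            _ ≤ (F y).lo := h.1
        · calc min (F x).hi (1/2) ≤ min (F x).hi (min (min (F x).hi (1/2)) (1/2)) := by
                simp [le_min_iff, min_le_iff]
            _ ≤ min (F x).hi (min (F ⊤).hi (1/2)) :=
                min_le_min le_rfl (min_le_min h7x.2 le_rfl)
            _ ≤ (F y).hi := h.2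
      refine ⟨?_, mono⟩
      intro x y
      have hy : y ≤ limp x (mul x y) := by rw [← res_limp]
      have hmono := mono _ _ hy
      have h := h8 x (mul x y)
      rw [IV.le_def'] at hmono h ⊢
      simp only [IV.rmin_lo, IV.rmin_hi, IV.half_lo, IV.half_hi] at hmono h ⊢
      constructor
      · calc min (F x).lo (min (F y).lo (1/2))
            ≤ min (F x).lo (min (min (F y).lo (1/2)) (1/2)) := by
              simp [le_min_iff, min_le_iff]
          _ ≤ min (F x).lo (min (F (limp x (mul x y))).lo (1/2)) :=
              min_le_min le_rfl (min_le_min hmono.1 le_rfl)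
          _ ≤ (F (mul x y)).lo := h.1
      · calc min (F x).hi (min (F y).hi (1/2))
            ≤ min (F x).hi (min (min (F y).hi (1/2)) (1/2)) := by
              simp [le_min_iff, min_le_iff]
          _ ≤ min (F x).hi (min (F (limp x (mul x y))).hi (1/2)) :=
              min_le_min le_rfl (min_le_min hmono.2 le_rfl)
          _ ≤ (F (mul x y)).hi := h.2
end
end

section
/- An interval valued fuzzy set F of a pseudo BL-algebra A is an interval valued (∈,∈∨q)-fuzzy implicative filter if and only if for every interval number t with [0,0] < t ≤ [0.5,0.5], each nonempty level subset F_t is an implicative filter of A. -/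
noncomputable section

universe u

open PseudoBL

open IV

namespace IV
lemma ivle_trans {a b c : IV} (h1 : a ≤ b) (h2 : b ≤ c) : a ≤ c :=
  ⟨h1.1.trans h2.1, h1.2.trans h2.2⟩
lemma iv_zero_le (a : IV) : IV.zero ≤ a :=
  ⟨a.lo_nonneg, a.lo_nonneg.trans a.lo_le_hi⟩
lemma rmin_le_left (a b : IV) : rmin a b ≤ a := ⟨min_le_left _ _, min_le_left _ _⟩
lemma rmin_le_right (a b : IV) : rmin a b ≤ b := ⟨min_le_right _ _, min_le_right _ _⟩
lemma le_rmin {a b c : IV} (h1 : c ≤ a) (h2 : c ≤ b) : c ≤ rmin a b :=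
  ⟨le_min h1.1 h2.1, le_min h1.2 h2.2⟩
end IV

theorem stmt13 {A : Type u} [PseudoBL A] (F : A → IV) :
    InqImplicative F ↔
      ∀ t : IV, IV.zero < t → t ≤ IV.half → (lvl F t).Nonempty →
        PseudoBL.IsImplicativeFilter (lvl F t) := by
  constructor
  · rintro ⟨⟨hmul, hmono⟩, himp⟩ t ht0 ht2 hne
    refine ⟨⟨hne, ?_, ?_⟩, ?_⟩
    · intro x hx y hy
      exact ivle_trans (le_rmin hx (le_rmin hy ht2)) (hmul x y)
    · intro x hx y hxy
      exact ivle_trans (le_rmin hx ht2) (hmono x y hxy)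
    · intro x y
      exact ⟨fun hx => ivle_trans (le_rmin hx ht2) (himp x y).1,
             fun hx => ivle_trans (le_rmin hx ht2) (himp x y).2⟩
  · intro h
    have key : ∀ (t : IV) (z : A), (IV.zero < t → t ≤ F z) → t ≤ F z := by
      intro t z hz
      by_cases h0 : t = IV.zero
      · subst h0; exact iv_zero_le _
      · exact hz ⟨iv_zero_le t, fun e => h0 e.symm⟩
    refine ⟨⟨?_, ?_⟩, ?_⟩
    · intro x y
      apply key
      intro ht0
      have ht2 : rmin (F x) (rmin (F y) half) ≤ IV.half :=
        ivle_trans (rmin_le_right _ _) (rmin_le_right _ _)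
      have hx : x ∈ lvl F (rmin (F x) (rmin (F y) half)) := rmin_le_left _ _
      have hy : y ∈ lvl F (rmin (F x) (rmin (F y) half)) :=
        ivle_trans (rmin_le_right _ _) (rmin_le_left _ _)
      exact (h _ ht0 ht2 ⟨x, hx⟩).1.2.1 x hx y hy
    · intro x y hxy
      apply key
      intro ht0
      have hx : x ∈ lvl F (rmin (F x) half) := rmin_le_left (F x) half
      exact (h _ ht0 (rmin_le_right _ _) ⟨x, hx⟩).1.2.2 x hx y hxy
    · intro x y
      constructor
      · apply key
        intro ht0
        have hx : limp (rimp x y) x ∈ lvl F (rmin (F (limp (rimp x y) x)) half) := rmin_le_left _ half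
        exact ((h _ ht0 (rmin_le_right _ _) ⟨_, hx⟩).2 x y).1 hx
      · apply key
        intro ht0
        have hx : rimp (limp x y) x ∈ lvl F (rmin (F (rimp (limp x y) x)) half) := rmin_le_left _ half
        exact ((h _ ht0 (rmin_le_right _ _) ⟨_, hx⟩).2 x y).2 hx
end
end
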